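/- Suppose for every increasing sequence (n_i) of naturals there exist an increasing sequence (i_k) and y ∈ 2^ω such that for every x ∈ X and all sufficiently large k there is l ∈ [i_k, i_{k+1}) with x↾[n_l, n_{l+1}) = y↾[n_l, n_{l+1}). Then X + Lim T is meager for every nowhere dense tree T on 2^{<ω}; in particular X is meager-additive. -/

import Mathlib

open MeasureTheory Pointwise

/-- Cantor space `2^ω` with componentwise addition mod 2. -/
abbrev Cantor : Type := ℕ → ZMod 2
/-- Finite binary sequences, the nodes of `2^{<ω}`. -/
abbrev FinSeq : Type := List (ZMod 2)

instance : TopologicalSpace (ZMod 2) := ⊥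
instance : DiscreteTopology (ZMod 2) := ⟨rfl⟩
noncomputable instance : MeasurableSpace Cantor := borel Cantor
instance : BorelSpace Cantor := ⟨rfl⟩

/-- The uniform (Lebesgue) product measure on `2^ω`, realized as the Haar measure of the
compact group `2^ω` normalized so that the whole space has measure 1. -/
noncomputable def μC : Measure Cantor := Measure.addHaarMeasure ⊤

/-- `X` is null-additive: `X + A` is null for every null `A`. -/
def NullAdditive (X : Set Cantor) : Prop := ∀ A : Set Cantor, μC A = 0 → μC (X + A) = 0

/-- `X` is meager-additive: `X + A` is meager for every meager `A`. -/
def MeagerAdditive (X : Set Cantor) : Prop := ∀ A : Set Cantor, IsMeagre A → IsMeagre (X + A)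

/-- A tree on `2^{<ω}`: nonempty, closed under initial segments, and every node has
extensions in the tree of every greater length. -/
def IsTree (T : Set FinSeq) : Prop :=
  T.Nonempty ∧ (∀ σ τ : FinSeq, σ <+: τ → τ ∈ T → σ ∈ T) ∧
    ∀ σ ∈ T, ∀ n, σ.length < n → ∃ τ ∈ T, σ <+: τ ∧ τ.length = n

/-- Restriction `x↾n` of `x ∈ 2^ω`. -/
def res (x : Cantor) (n : ℕ) : FinSeq := (List.range n).map x

/-- `Lim T = {x ∈ 2^ω : ∀ n, x↾n ∈ T}`. -/
def LimT (T : Set FinSeq) : Set Cantor := {x | ∀ n, res x n ∈ T}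

/-- A nowhere dense tree: every node has an extension outside the tree. -/
def NwdTree (T : Set FinSeq) : Prop := ∀ η ∈ T, ∃ τ : FinSeq, η <+: τ ∧ τ ∉ T

/-- Componentwise mod-2 addition of finite sequences (of the same length). -/
def finAdd : FinSeq → FinSeq → FinSeq := List.zipWith (· + ·)

/-- `T + S = {η + σ : η ∈ T, σ ∈ S, same length}`. -/
def treeSum (T S : Set FinSeq) : Set FinSeq :=
  {ρ | ∃ η ∈ T, ∃ σ ∈ S, η.length = σ.length ∧ ρ = finAdd η σ}

/-- `T^{[η]} = {τ ∈ T : τ ⊑ η or η ⊑ τ}`. -/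
def through (T : Set FinSeq) (η : FinSeq) : Set FinSeq := {τ ∈ T | τ <+: η ∨ η <+: τ}

/-- `A^{fin}`: points agreeing with some point of `A` at all but finitely many coordinates. -/
def finEq (A : Set Cantor) : Set Cantor := {y | ∃ x ∈ A, ∀ᶠ n in Filter.atTop, y n = x n}

/-- `U^{⟨ν⟩} = {τ : ν⌢τ ∈ U}`. -/
def above (U : Set FinSeq) (ν : FinSeq) : Set FinSeq := {τ | ν ++ τ ∈ U}

/-- A corset: a nondecreasing function `ω → ω \ {0}` tending to infinity. -/
def Corset (f : ℕ → ℕ) : Prop :=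
  Monotone f ∧ (∀ n, 0 < f n) ∧ Filter.Tendsto f Filter.atTop Filter.atTop

/-- `S` is of width `f`: `|S ∩ 2^n| ≤ f n` for all `n`. -/
def widthLe (S : Set FinSeq) (f : ℕ → ℕ) : Prop := ∀ n, {τ ∈ S | τ.length = n}.ncard ≤ f n

/-- `S` is almost of width `f`: `|S ∩ 2^n| ≤ f n` for all sufficiently large `n`. -/
def almostWidthLe (S : Set FinSeq) (f : ℕ → ℕ) : Prop :=
  ∀ᶠ n in Filter.atTop, {τ ∈ S | τ.length = n}.ncard ≤ f n

/-- Condition (b) of Theorem 18. -/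
def MatchProp (X : Set Cantor) : Prop :=
  ∀ n : ℕ → ℕ, StrictMono n →
    ∃ i : ℕ → ℕ, StrictMono i ∧ ∃ y : Cantor,
      ∀ x ∈ X, ∀ᶠ k in Filter.atTop, ∃ l, i k ≤ l ∧ l < i (k + 1) ∧
        ∀ m, n l ≤ m → m < n (l + 1) → x m = y m

/-!
Cut `ω` into blocks `[n_l, n_{l+1})` so long that on each block some pattern `p` is incompatible
with every branch of `T`: `T` is nowhere dense and has finitely many nodes of each length, so one
segment pushes all of them out of `T` at once. The hypothesis applied to this partition gives
`(i_k)` and `y`. If `z = x + a` with `x ∈ X`, `a ∈ Lim T`, then for almost all `k` the point `x`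
agrees with `y` on some block inside `[n_{i_k}, n_{i_{k+1}})`, where `a` differs from `p`; so `z`
differs from `y + p` somewhere on that interval. For a fixed threshold this is a closed condition
failing at every point that is eventually equal to `y + p`, hence `X + Lim T` is meagre.
Meagre-additivity follows, since every nowhere dense set lies in `Lim` of the nowhere dense
tree of its restrictions.
-/

open Filter Topology

lemma exists_eq_on_blocks {α : Type*} {n : ℕ → ℕ} (hn : StrictMono n) (w : ℕ → ℕ → α) :
    ∃ p : ℕ → α, ∀ l, ∀ m ∈ Finset.Ico (n l) (n (l + 1)), p m = w l m := by
  classical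
  have huniq : ∀ {l l' m}, m ∈ Finset.Ico (n l) (n (l + 1)) →
      m ∈ Finset.Ico (n l') (n (l' + 1)) → l' = l := by
    intro l l' m h h'
    simp only [Finset.mem_Ico] at h h'
    by_contra hne
    rcases Nat.lt_or_gt_of_ne hne with hlt | hlt
    · have := hn.monotone (show l' + 1 ≤ l by omega); omega
    · have := hn.monotone (show l + 1 ≤ l' by omega); omega
  refine ⟨fun m => if h : ∃ l, m ∈ Finset.Ico (n l) (n (l + 1)) then w h.choose m else w 0 m,
    fun l m hm => ?_⟩
  have h : ∃ l, m ∈ Finset.Ico (n l) (n (l + 1)) := ⟨l, hm⟩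
  simp only [dif_pos h, huniq hm h.choose_spec]

section ProductOfDiscrete

variable {α : Type*} [TopologicalSpace α] [DiscreteTopology α]

lemma exists_cylinder_subset_of_mem_nhds {z : ℕ → α} {U : Set (ℕ → α)} (hU : U ∈ 𝓝 z) :
    ∃ N, PiNat.cylinder z N ⊆ U := by
  obtain ⟨_, ⟨x, N, rfl⟩, hz, hsub⟩ := (PiNat.isTopologicalBasis_cylinders _).mem_nhds_iff.1 hU
  exact ⟨N, (PiNat.mem_cylinder_iff_eq.1 hz).trans_subset hsub⟩

lemma isMeagre_setOf_eventually_exists_ne (q : ℕ → α) {N : ℕ → ℕ}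
    (hN : Tendsto N atTop atTop) :
    IsMeagre {z : ℕ → α | ∀ᶠ k in atTop, ∃ m ∈ Finset.Ico (N k) (N (k + 1)), z m ≠ q m} := by
  set D : ℕ → Set (ℕ → α) := fun k => {z | ∃ m ∈ Finset.Ico (N k) (N (k + 1)), z m ≠ q m}
  have hD : ∀ k, IsClosed (D k) := fun k => by
    rw [show D k = ⋃ m ∈ Finset.Ico (N k) (N (k + 1)), {z | z m ≠ q m} by ext; simp [D]]
    exact isClosed_biUnion_finset fun m _ =>
      (isClosed_discrete {q m}ᶜ).preimage (continuous_apply (A := fun _ => α) m)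
  have hcover : {z | ∀ᶠ k in atTop, z ∈ D k} = ⋃ K, ⋂ k ≥ K, D k := by
    ext z; simp [eventually_atTop]
  change IsMeagre {z | ∀ᶠ k in atTop, z ∈ D k}
  rw [hcover]
  refine isMeagre_iUnion fun K => IsNowhereDense.isMeagre ?_
  refine (isClosed_biInter fun k _ => hD k).isNowhereDense_iff.2
    (Set.eq_empty_of_forall_notMem fun z hz => ?_)
  obtain ⟨M, hM⟩ := exists_cylinder_subset_of_mem_nhds (isOpen_interior.mem_nhds hz)
  obtain ⟨k, hkM, hkK⟩ := ((hN.eventually_ge_atTop M).and (eventually_ge_atTop K)).exists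
  have hz' : (fun m => if m < M then z m else q m) ∈ D k :=
    Set.mem_iInter₂.1 (interior_subset (hM fun m hm => if_pos hm)) k hkK
  obtain ⟨m, hm, hne⟩ := hz'
  exact hne (if_neg (by rw [Finset.mem_Ico] at hm; omega))

end ProductOfDiscrete

lemma res_length (x : Cantor) (n : ℕ) : (res x n).length = n := by
  simp [res]

lemma res_take (x : Cantor) {a b : ℕ} (h : a ≤ b) : (res x b).take a = res x a := by
  simp [res, ← List.map_take, List.take_range, Nat.min_eq_left h]

lemma res_eq_res_iff {x y : Cantor} {n : ℕ} : res x n = res y n ↔ ∀ m < n, x m = y m := by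
  simp [res, List.map_inj_left]

lemma res_add (x : Cantor) (m k : ℕ) :
    res x (m + k) = res x m ++ (List.range k).map (fun j => x (m + j)) := by
  simp [res, List.range_add, List.map_map, Function.comp_def]

lemma eq_res_length_of_prefix {σ : FinSeq} {x : Cantor} {n : ℕ} (h : σ <+: res x n) :
    σ = res x σ.length :=
  (List.prefix_iff_eq_take.1 h).trans (res_take x (by simpa [res_length] using h.length_le))

section NowhereDenseTrees

variable {T : Set FinSeq}

lemma exists_append_notMem (hpre : ∀ σ τ : FinSeq, σ <+: τ → τ ∈ T → σ ∈ T)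
    (hnwd : NwdTree T) (L : List FinSeq) : ∃ s : FinSeq, ∀ h ∈ L, h ++ s ∉ T := by
  induction L with
  | nil => exact ⟨[], by simp⟩
  | cons a L ih =>
    obtain ⟨s, hs⟩ := ih
    by_cases hmem : a ++ s ∈ T
    · obtain ⟨_, ⟨r, rfl⟩, hτ⟩ := hnwd _ hmem
      refine ⟨s ++ r, fun h hh => ?_⟩
      rcases List.mem_cons.1 hh with rfl | hh
      · rwa [← List.append_assoc]
      · exact fun hT => hs h hh (hpre _ _ ⟨r, List.append_assoc _ _ _⟩ hT)
    · exact ⟨s, fun h hh => (List.mem_cons.1 hh).elim (· ▸ hmem) (hs h)⟩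

lemma exists_segment_avoiding_limT (hpre : ∀ σ τ : FinSeq, σ <+: τ → τ ∈ T → σ ∈ T)
    (hnwd : NwdTree T) (m : ℕ) :
    ∃ m' > m, ∃ w : Cantor, ∀ a ∈ LimT T, ∃ j ∈ Finset.Ico m m', a j ≠ w j := by
  obtain ⟨s, hs⟩ := exists_append_notMem hpre hnwd (List.finite_length_eq (ZMod 2) m).toFinset.toList
  set t := s ++ [0]
  refine ⟨m + t.length, by simp [t], fun j => t.getD (j - m) 0, fun a ha => ?_⟩
  by_contra! hagree
  have hseg : (List.range t.length).map (fun j => a (m + j)) = t := by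
    refine List.ext_getElem (by simp) fun j h₁ h₂ => ?_
    simp only [List.getElem_map, List.getElem_range]
    rw [hagree (m + j) (by simp at h₁ ⊢; omega), Nat.add_sub_cancel_left, List.getD_eq_getElem]
  have hmem := ha (m + t.length)
  rw [res_add, hseg] at hmem
  exact hs (res a m) (by simp [res_length]) (hpre _ _ ⟨[0], by simp [t]⟩ hmem)

lemma exists_blocks_avoiding_limT (hpre : ∀ σ τ : FinSeq, σ <+: τ → τ ∈ T → σ ∈ T)
    (hnwd : NwdTree T) :
    ∃ n : ℕ → ℕ, StrictMono n ∧ ∃ p : Cantor,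
      ∀ a ∈ LimT T, ∀ l, ∃ m ∈ Finset.Ico (n l) (n (l + 1)), a m ≠ p m := by
  choose next hnext w hw using exists_segment_avoiding_limT hpre hnwd
  set n : ℕ → ℕ := fun l => next^[l] 0
  have hsucc : ∀ l, n (l + 1) = next (n l) := fun l => Function.iterate_succ_apply' next l 0
  have hn : StrictMono n := strictMono_nat_of_lt_succ fun l => (hsucc l).symm ▸ hnext (n l)
  obtain ⟨p, hp⟩ := exists_eq_on_blocks hn fun l => w (n l)
  refine ⟨n, hn, p, fun a ha l => ?_⟩
  obtain ⟨m, hm, ham⟩ := hw (n l) a ha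
  rw [← hsucc] at hm
  exact ⟨m, hm, (hp l m hm).symm ▸ ham⟩

theorem isMeagre_add_limT {X : Set Cantor} (hX : MatchProp X)
    (hpre : ∀ σ τ : FinSeq, σ <+: τ → τ ∈ T → σ ∈ T) (hnwd : NwdTree T) :
    IsMeagre (X + LimT T) := by
  obtain ⟨n, hn, p, hp⟩ := exists_blocks_avoiding_limT hpre hnwd
  obtain ⟨i, hi, y, hy⟩ := hX n hn
  refine (isMeagre_setOf_eventually_exists_ne (y + p) (hn.comp hi).tendsto_atTop).mono ?_
  rintro _ ⟨x, hx, a, ha, rfl⟩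
  filter_upwards [hy x hx] with k ⟨l, hil, hli, hxy⟩
  obtain ⟨m, hm, ham⟩ := hp a ha l
  rw [Finset.mem_Ico] at hm
  refine ⟨m, Finset.mem_Ico.2 ⟨(hn.monotone hil).trans hm.1,
    hm.2.trans_le (hn.monotone (Nat.succ_le_of_lt hli))⟩, ?_⟩
  simp only [Pi.add_apply, hxy m hm.1 hm.2]
  exact fun h => ham (add_left_cancel h)

end NowhereDenseTrees

def restrictionTree (F : Set Cantor) : Set FinSeq := {σ | ∃ x ∈ F, ∃ n, res x n = σ}

lemma prefix_mem_restrictionTree {F : Set Cantor} {σ τ : FinSeq} (h : σ <+: τ)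
    (hτ : τ ∈ restrictionTree F) : σ ∈ restrictionTree F := by
  obtain ⟨x, hx, n, rfl⟩ := hτ
  exact ⟨x, hx, σ.length, (eq_res_length_of_prefix h).symm⟩

lemma subset_limT_restrictionTree (F : Set Cantor) : F ⊆ LimT (restrictionTree F) :=
  fun x hx n => ⟨x, hx, n, rfl⟩

lemma nwdTree_restrictionTree {F : Set Cantor} (hF : IsNowhereDense F) :
    NwdTree (restrictionTree F) := by
  rintro _ ⟨x, -, n, rfl⟩
  have hcyl : ¬ PiNat.cylinder x n ⊆ closure F := fun hsub =>
    Set.notMem_empty x (hF ▸ (PiNat.isOpen_cylinder _ x n).subset_interior_iff.2 hsub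
      (PiNat.self_mem_cylinder x n))
  obtain ⟨z, hzx, hzF⟩ := Set.not_subset.1 hcyl
  obtain ⟨N, hN⟩ := exists_cylinder_subset_of_mem_nhds (isClosed_closure.isOpen_compl.mem_nhds hzF)
  refine ⟨res z (max n N), ?_, ?_⟩
  · rw [res_eq_res_iff.2 fun m hm => (hzx m hm).symm, ← res_take z (le_max_left n N)]
    exact List.take_prefix _ _
  · rintro ⟨x', hx', k, hk⟩
    have hlen : k = max n N := by simpa [res_length] using congrArg List.length hk
    subst hlen
    exact hN (fun m hm => (res_eq_res_iff.1 hk m (by omega)).symm ▸ rfl) (subset_closure hx')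

lemma isMeagre_add_of_forall_isNowhereDense {G : Type*} [TopologicalSpace G] [Add G]
    {X A : Set G} (hX : ∀ F, IsNowhereDense F → IsMeagre (X + F)) (hA : IsMeagre A) :
    IsMeagre (X + A) := by
  obtain ⟨S, hS, hSc, hAS⟩ := isMeagre_iff_countable_union_isNowhereDense.1 hA
  refine (isMeagre_biUnion hSc fun F hF => hX F (hS F hF)).mono ?_
  rw [← Set.add_sUnion]
  exact Set.add_subset_add_left hAS

/-- Theorem 18, (b) → (a). -/
theorem stmt15 (X : Set Cantor) (h : MatchProp X) :
    (∀ T : Set FinSeq, IsTree T → NwdTree T → IsMeagre (X + LimT T)) ∧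
      MeagerAdditive X := by
  refine ⟨fun T hT hnwd => isMeagre_add_limT h hT.2.1 hnwd, fun A hA => ?_⟩
  refine isMeagre_add_of_forall_isNowhereDense (fun F hF => ?_) hA
  refine (isMeagre_add_limT h (fun σ τ => prefix_mem_restrictionTree)
    (nwdTree_restrictionTree hF)).mono ?_
  exact Set.add_subset_add_left (subset_limT_restrictionTree F)
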